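/- arXiv:2407.19092 — 3 statements merged into one kernel-verified Lean document; each statement's English description precedes it below -/
import Mathlib

section
/- For every real γ ≥ 1, the GND normalizing constant satisfies γ^{1/γ} · Γ(1 + 1/γ) ≥ 1, with equality at γ = 1. -/
open Real

private lemma one_le_Gamma_of_two_le {s : ℝ} (hs : 2 ≤ s) : 1 ≤ Real.Gamma s := by
  rcases eq_or_lt_of_le hs with h | h
  · rw [← h, Real.Gamma_two]
  · have key := Real.convexOn_Gamma.slope_mono_adjacent
      (x := 1) (y := 2) (z := s)
      (by norm_num : (1:ℝ) ∈ Set.Ioi 0) (by simp only [Set.mem_Ioi]; linarith : s ∈ Set.Ioi (0:ℝ))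
      (by norm_num) h
    rw [Real.Gamma_one, Real.Gamma_two] at key
    have h2 : (0:ℝ) ≤ (Real.Gamma s - 1) / (s - 2) := by
      calc (0:ℝ) = (1 - 1) / (2 - 1) := by norm_num
        _ ≤ _ := key
    have h3 : 0 < s - 2 := by linarith
    have := (div_nonneg_iff.mp h2)
    rcases this with ⟨ha, _⟩ | ⟨_, hb⟩
    · linarith
    · linarith

set_option maxHeartbeats 1600000 in
private lemma gamma_ge_rpow_self (t : ℝ) (h0 : 0 < t) (h1 : t ≤ 1) :
    t ^ t ≤ Real.Gamma (1 + t) := by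
  have hΓpos : 0 < Real.Gamma (1 + t) := Real.Gamma_pos_of_pos (by linarith)
  -- reduce to logs
  suffices hlog : t * Real.log t ≤ Real.log (Real.Gamma (1 + t)) by
    calc t ^ t = Real.exp (Real.log t * t) := Real.rpow_def_of_pos h0 t
      _ ≤ Real.exp (Real.log (Real.Gamma (1 + t))) := by
          apply Real.exp_le_exp.mpr; linarith [hlog]
      _ = Real.Gamma (1 + t) := Real.exp_log hΓpos
  -- value of Gamma (3/2)
  have h32 : Real.Gamma (3/2) = Real.sqrt π / 2 := by
    have : Real.Gamma (1/2 + 1) = (1/2) * Real.Gamma (1/2) :=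
      Real.Gamma_add_one (by norm_num)
    rw [show (3:ℝ)/2 = 1/2 + 1 by norm_num, this, Real.Gamma_one_half_eq]
    ring
  have hsqrtpi_lb : (1.772 : ℝ) ≤ Real.sqrt π := by
    rw [show (1.772:ℝ) = Real.sqrt (1.772^2) by rw [Real.sqrt_sq]; norm_num]
    apply Real.sqrt_le_sqrt; nlinarith [Real.pi_gt_d2]
  have h32pos : 0 < Real.Gamma (3/2) := Real.Gamma_pos_of_pos (by norm_num)
  -- lower bound for log Gamma (3/2)
  have hlog32 : (1 : ℝ) - 2 / Real.sqrt π ≤ Real.log (Real.Gamma (3/2)) := by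
    have hx : (0:ℝ) < 2 / Real.sqrt π := by positivity
    have := Real.log_le_sub_one_of_pos hx
    have hinv : Real.log (2 / Real.sqrt π) = - Real.log (Real.Gamma (3/2)) := by
      rw [h32, ← Real.log_inv]; norm_num
    rw [hinv] at this; linarith
  rcases le_or_gt t 0.36 with hc1 | hc1
  · -- region 1 : t ≤ 0.36
    have hG2 : Real.Gamma (2 + t) = (1 + t) * Real.Gamma (1 + t) := by
      have := Real.Gamma_add_one (s := 1 + t) (by linarith)
      rw [show (2:ℝ) + t = 1 + t + 1 by ring, this]
    have hG2ge : (1:ℝ) ≤ Real.Gamma (2 + t) := one_le_Gamma_of_two_le (by linarith)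
    have hGe : 1 / (1 + t) ≤ Real.Gamma (1 + t) := by
      rw [div_le_iff₀ (by linarith)]; nlinarith
    have hlogGe : - Real.log (1 + t) ≤ Real.log (Real.Gamma (1 + t)) := by
      have := Real.log_le_log (by positivity) hGe
      rwa [one_div, Real.log_inv] at this
    have hlog1t : Real.log (1 + t) ≤ t := by
      have := Real.log_le_sub_one_of_pos (show (0:ℝ) < 1 + t by linarith)
      linarith
    have hlt : Real.log t ≤ -1 := by
      have h1e : t ≤ Real.exp (-1) := by
        have h9 : Real.exp 1 < 2.7182818286 := Real.exp_one_lt_d9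
        have : (0.36 : ℝ) * Real.exp 1 < 1 := by nlinarith [Real.exp_pos 1]
        have hE : (0.36:ℝ) < Real.exp (-1) := by
          rw [Real.exp_neg]
          rw [lt_inv_comm₀ (by positivity) (Real.exp_pos 1)] at *
          nlinarith [Real.exp_pos 1]
        linarith
      calc Real.log t ≤ Real.log (Real.exp (-1)) := Real.log_le_log h0 h1e
        _ = -1 := Real.log_exp _
    nlinarith [hlogGe, hlog1t, hlt, h0]
  · rcases le_or_gt t (1/2) with hc2 | hc2
    · -- region 2 : 0.36 < t ≤ 1/2
      have hkey : (2 - 2*t) * Real.log (Real.Gamma (3/2)) ≤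
          Real.log (Real.Gamma (1 + t)) := by
        rcases eq_or_lt_of_le hc2 with he | hlt2
        · rw [he]; norm_num
        · have slope := Real.convexOn_log_Gamma.slope_mono_adjacent
            (x := 1 + t) (y := 3/2) (z := 2)
            (by simp only [Set.mem_Ioi]; linarith) (by norm_num)
            (by linarith) (by norm_num)
          simp only [Function.comp_apply, Real.Gamma_two, Real.log_one] at slope
          have d1 : (0:ℝ) < 3/2 - (1 + t) := by linarith
          rw [div_le_div_iff₀ d1 (by norm_num)] at slope
          nlinarith [slope]
      have hloght : Real.log 2 ≤ - Real.log t := by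
        have : Real.log t ≤ Real.log (1/2) := Real.log_le_log h0 (by linarith)
        rw [show (1:ℝ)/2 = 2⁻¹ by norm_num, Real.log_inv] at this
        linarith
      have hl2 : (0.6931471803 : ℝ) < Real.log 2 := Real.log_two_gt_d9
      -- t * log t ≤ -0.36 * log 2 ≤ -0.2495
      have ht1 : t * Real.log t ≤ -(0.36 * Real.log 2) := by
        have hlt0 : Real.log t < 0 := by nlinarith
        nlinarith
      -- (2-2t) * log Γ(3/2) ≥ (2-2t) * (1 - 2/√π) ≥ 1.28 * (1 - 2/1.772)
      have hsp : 2 / Real.sqrt π ≤ 2 / 1.772 := by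
        apply div_le_div_of_nonneg_left (by norm_num) (by norm_num) hsqrtpi_lb
      have hb : (1:ℝ) - 2/1.772 ≤ Real.log (Real.Gamma (3/2)) := by linarith
      have hmul : (2 - 2*t) * (1 - 2/1.772 : ℝ) ≤
          (2 - 2*t) * Real.log (Real.Gamma (3/2)) := by
        apply mul_le_mul_of_nonneg_left hb (by linarith)
      have : (1.28 : ℝ) * (1 - 2/1.772) ≤ (2 - 2*t) * (1 - 2/1.772 : ℝ) := by
        nlinarith
      nlinarith
    · rcases le_or_gt t (3/4) with hc3 | hc3
      · -- region 3 : 1/2 < t ≤ 3/4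
        have hkey : (2*t) * Real.log (Real.Gamma (3/2)) ≤
            Real.log (Real.Gamma (1 + t)) := by
          have slope := Real.convexOn_log_Gamma.slope_mono_adjacent
            (x := 1) (y := 3/2) (z := 1 + t)
            (by norm_num) (by simp only [Set.mem_Ioi]; linarith)
            (by norm_num) (by linarith)
          simp only [Function.comp_apply, Real.Gamma_one, Real.log_one] at slope
          have d1 : (0:ℝ) < 1 + t - 3/2 := by linarith
          rw [div_le_div_iff₀ (by norm_num) d1] at slope
          nlinarith [slope]
        have h2log : 2 * Real.log (Real.Gamma (3/2)) = Real.log (π/4) := by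
          rw [h32, show Real.sqrt π / 2 = Real.sqrt π * (1/2) by ring,
            Real.log_mul (by positivity) (by norm_num)]
          rw [show (π:ℝ)/4 = π * (1/4) by ring,
            Real.log_mul Real.pi_pos.ne' (by norm_num)]
          rw [Real.log_sqrt Real.pi_pos.le]
          rw [show ((1:ℝ)/4) = (1/2)*(1/2) by norm_num,
            Real.log_mul (by norm_num) (by norm_num)]
          ring
        have hlt : Real.log t ≤ Real.log (π/4) := by
          apply Real.log_le_log h0
          nlinarith [Real.pi_gt_three]
        calc t * Real.log t ≤ t * Real.log (π/4) :=
              mul_le_mul_of_nonneg_left hlt h0.le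
          _ = (2*t) * Real.log (Real.Gamma (3/2)) := by rw [← h2log]; ring
          _ ≤ _ := hkey
      · -- region 4 : 3/4 < t ≤ 1
        rcases eq_or_lt_of_le h1 with he | hlt1
        · rw [he]; norm_num [Real.Gamma_two]
        have hG3 : Real.Gamma (3:ℝ) = 2 := by
          rw [show (3:ℝ) = ((2:ℕ):ℝ) + 1 by norm_num, Real.Gamma_nat_eq_factorial]
          norm_num [Nat.factorial]
        have hkey : (t - 1) * Real.log 2 ≤ Real.log (Real.Gamma (1 + t)) := by
          have slope := Real.convexOn_log_Gamma.slope_mono_adjacent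
            (x := 1 + t) (y := 2) (z := 3)
            (by simp only [Set.mem_Ioi]; linarith) (by norm_num)
            (by linarith) (by norm_num)
          simp only [Function.comp_apply, Real.Gamma_two, Real.log_one, hG3] at slope
          have d1 : (0:ℝ) < 2 - (1 + t) := by linarith
          rw [div_le_div_iff₀ d1 (by norm_num)] at slope
          nlinarith [slope]
        -- need t * log t ≤ (t-1) * log 2
        set s := Real.sqrt t with hs
        have hs2 : s^2 = t := Real.sq_sqrt h0.le
        have hs1 : s ≤ 1 := by
          rw [show (1:ℝ) = Real.sqrt 1 by simp]
          exact Real.sqrt_le_sqrt h1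
        have hspos : 0 < s := Real.sqrt_pos.mpr h0
        have hlogt : Real.log t = 2 * Real.log s := by
          rw [← hs2, Real.log_pow]; push_cast; ring
        have hlogs : Real.log s ≤ s - 1 := Real.log_le_sub_one_of_pos hspos
        have hl2u : Real.log 2 < 0.6931471808 := Real.log_two_lt_d9
        have hl2l : (0:ℝ) < Real.log 2 := Real.log_pos (by norm_num)
        have hstep : (1 + s) * Real.log 2 ≤ 2 * s^2 := by nlinarith
        have : t * Real.log t ≤ 2 * s^2 * (s - 1) := by
          rw [hlogt, ← hs2]; nlinarith
        have hfin : 2 * s^2 * (s - 1) ≤ (t - 1) * Real.log 2 := by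
          rw [← hs2]
          nlinarith [mul_nonneg (sub_nonneg.mpr hs1) (sub_nonneg.mpr hstep)]
        linarith

/-- For every real `γ ≥ 1`, the GND normalizing constant satisfies
`γ^{1/γ} Γ(1 + 1/γ) ≥ 1`, with equality at `γ = 1`. -/
theorem gnd_normalizing_constant_ge_one (γ : ℝ) (hγ : 1 ≤ γ) :
    1 ≤ γ ^ (1 / γ) * Real.Gamma (1 + 1 / γ) ∧
    (1 : ℝ) ^ ((1 : ℝ) / 1) * Real.Gamma (1 + 1 / 1) = 1 := by
  have hγ0 : 0 < γ := by linarith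
  constructor
  · have h0 : 0 < 1 / γ := by positivity
    have h1 : 1 / γ ≤ 1 := by
      rw [div_le_one hγ0]; exact hγ
    have key : (1/γ) ^ (1/γ) ≤ Real.Gamma (1 + 1/γ) := gamma_ge_rpow_self _ h0 h1
    have hprod : γ ^ (1/γ) * (1/γ) ^ (1/γ) = 1 := by
      rw [← Real.mul_rpow hγ0.le h0.le, mul_one_div, div_self hγ0.ne', Real.one_rpow]
    calc (1:ℝ) = γ ^ (1/γ) * (1/γ) ^ (1/γ) := hprod.symm
      _ ≤ γ ^ (1/γ) * Real.Gamma (1 + 1/γ) := by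
          apply mul_le_mul_of_nonneg_left key
          positivity
  · norm_num [Real.Gamma_two]
end

section
/- Let γ ≥ 1 be real and let n ≥ 3 be a natural number. If W has the standard Generalized Normal Distribution GND(0,1) with shape γ, then the truncated γ-th absolute moment satisfies E[ |W|^γ · 1_{|W| > 2γ log n} ] ≤ 6 (log n) / n². Equivalently, {γ^{1/γ} Γ(1+1/γ)}^{-1} · ∫_{2γ log n}^{∞} w^γ exp(−w^γ/γ) dw ≤ 6 (log n) / n². -/
open MeasureTheory Real

/-- Tail bound for the GND integrand via an explicit antiderivative comparison. -/
lemma gnd_tail_integral_le {γ t : ℝ} (hγ : 1 ≤ γ) (ht : 1 ≤ t) :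
    ∫ w in Set.Ioi t, w ^ γ * Real.exp (-(w ^ γ / γ))
      ≤ (t + 1) * Real.exp (-(t ^ γ / γ)) := by
  have hγ0 : (0:ℝ) < γ := by linarith
  set g : ℝ → ℝ := fun w => -((w + 1) * Real.exp (-(w ^ γ / γ))) with hgdef
  set g' : ℝ → ℝ := fun w => Real.exp (-(w ^ γ / γ)) * ((w + 1) * w ^ (γ - 1) - 1) with hg'def
  have hderiv : ∀ x ∈ Set.Ici t, HasDerivAt g (g' x) x := by
    intro x _
    have h1 : HasDerivAt (fun w : ℝ => w ^ γ) (γ * x ^ (γ - 1)) x :=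
      Real.hasDerivAt_rpow_const (Or.inr hγ)
    have h2 : HasDerivAt (fun w : ℝ => -(w ^ γ / γ)) (-(x ^ (γ - 1))) x := by
      have := (h1.div_const γ).fun_neg
      exact this.congr_deriv (by rw [mul_div_cancel_left₀ _ hγ0.ne'])
    have h3 : HasDerivAt (fun w : ℝ => Real.exp (-(w ^ γ / γ)))
        (Real.exp (-(x ^ γ / γ)) * -(x ^ (γ - 1))) x := h2.exp
    have h4 : HasDerivAt (fun w : ℝ => w + 1) 1 x := (hasDerivAt_id x).add_const 1
    have h5 := (h4.mul h3).fun_neg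
    refine h5.congr_deriv ?_
    simp only [hg'def]
    ring
  have hpos : ∀ x ∈ Set.Ioi t, 0 ≤ g' x := by
    intro x hx
    have hx1 : (1:ℝ) ≤ x := le_of_lt (lt_of_le_of_lt ht hx)
    have h1 : (1:ℝ) ≤ x ^ (γ - 1) := Real.one_le_rpow hx1 (by linarith)
    have h2 : (0:ℝ) < Real.exp (-(x ^ γ / γ)) := Real.exp_pos _
    have : (1:ℝ) ≤ (x + 1) * x ^ (γ - 1) := by nlinarith
    simp only [hg'def]
    nlinarith
  have htend : Filter.Tendsto g Filter.atTop (nhds 0) := by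
    have hb : (0:ℝ) < 1 / γ := by positivity
    have hmaj : Filter.Tendsto (fun w : ℝ => 2 * (w ^ (1:ℝ) * Real.exp (-(1/γ) * w)))
        Filter.atTop (nhds 0) := by
      have := (tendsto_rpow_mul_exp_neg_mul_atTop_nhds_zero 1 (1/γ) hb).const_mul 2
      simpa using this
    have h0 : Filter.Tendsto (fun w : ℝ => (w + 1) * Real.exp (-(w ^ γ / γ)))
        Filter.atTop (nhds 0) := by
      apply tendsto_of_tendsto_of_tendsto_of_le_of_le' tendsto_const_nhds hmaj
      · filter_upwards [Filter.eventually_ge_atTop (1:ℝ)] with w hw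
        have : (0:ℝ) ≤ w + 1 := by linarith
        positivity
      · filter_upwards [Filter.eventually_ge_atTop (1:ℝ)] with w hw
        have hw0 : (0:ℝ) ≤ w := by linarith
        have hwγ : w ≤ w ^ γ := by
          calc w = w ^ (1:ℝ) := (Real.rpow_one w).symm
          _ ≤ w ^ γ := Real.rpow_le_rpow_of_exponent_le hw hγ
        have hexp : Real.exp (-(w ^ γ / γ)) ≤ Real.exp (-(1/γ) * w) := by
          apply Real.exp_le_exp.2
          rw [neg_mul, neg_le_neg_iff, one_div, inv_mul_eq_div]
          gcongr
        calc (w + 1) * Real.exp (-(w ^ γ / γ)) ≤ (w + 1) * Real.exp (-(1/γ) * w) := by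
              apply mul_le_mul_of_nonneg_left hexp (by linarith)
        _ ≤ 2 * (w ^ (1:ℝ) * Real.exp (-(1/γ) * w)) := by
              rw [Real.rpow_one]
              have : (0:ℝ) < Real.exp (-(1/γ) * w) := Real.exp_pos _
              nlinarith
    have := h0.neg
    simpa using this
  have hint : IntegrableOn g' (Set.Ioi t) volume :=
    integrableOn_Ioi_deriv_of_nonneg' hderiv hpos htend
  have hval : ∫ w in Set.Ioi t, g' w = 0 - g t :=
    integral_Ioi_of_hasDerivAt_of_nonneg' hderiv hpos htend
  have hptwise : ∀ x ∈ Set.Ioi t, x ^ γ * Real.exp (-(x ^ γ / γ)) ≤ g' x := by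
    intro x hx
    have hx1 : (1:ℝ) ≤ x := le_of_lt (lt_of_le_of_lt ht hx)
    have hx0 : (0:ℝ) < x := by linarith
    have h1 : (1:ℝ) ≤ x ^ (γ - 1) := Real.one_le_rpow hx1 (by linarith)
    have h2 : x ^ γ = x * x ^ (γ - 1) := by
      have h := Real.rpow_add hx0 1 (γ - 1)
      have e : (1:ℝ) + (γ - 1) = γ := by ring
      rw [e, Real.rpow_one] at h
      exact h
    have h3 : (0:ℝ) < Real.exp (-(x ^ γ / γ)) := Real.exp_pos _
    simp only [hg'def]
    nlinarith
  have hmeas : AEStronglyMeasurable (fun w : ℝ => w ^ γ * Real.exp (-(w ^ γ / γ)))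
      (volume.restrict (Set.Ioi t)) := by
    apply Continuous.aestronglyMeasurable
    have hc : Continuous fun w : ℝ => w ^ γ := Real.continuous_rpow_const (by linarith)
    exact hc.mul (Real.continuous_exp.comp ((hc.div_const γ).neg))
  have hfint : IntegrableOn (fun w : ℝ => w ^ γ * Real.exp (-(w ^ γ / γ))) (Set.Ioi t) volume := by
    apply MeasureTheory.Integrable.mono hint hmeas
    filter_upwards [ae_restrict_mem measurableSet_Ioi] with x hx
    have h1 := hptwise x hx
    have hx1 : (1:ℝ) ≤ x := le_of_lt (lt_of_le_of_lt ht hx)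
    have h0 : (0:ℝ) ≤ x ^ γ * Real.exp (-(x ^ γ / γ)) := by
      apply mul_nonneg (Real.rpow_nonneg (by linarith) γ) (Real.exp_pos _).le
    rw [Real.norm_eq_abs, Real.norm_eq_abs, abs_of_nonneg h0, abs_of_nonneg (le_trans h0 h1)]
    exact h1
  calc ∫ w in Set.Ioi t, w ^ γ * Real.exp (-(w ^ γ / γ))
      ≤ ∫ w in Set.Ioi t, g' w := setIntegral_mono_on hfint hint measurableSet_Ioi hptwise
  _ = 0 - g t := hval
  _ = (t + 1) * Real.exp (-(t ^ γ / γ)) := by simp [hgdef]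

/-- Lower bound `Γ(1+s) ≥ 1 - e⁻¹` for `0 < s ≤ 1`. -/
lemma gamma_one_add_ge {s : ℝ} (h0 : 0 < s) (h1 : s ≤ 1) :
    1 - Real.exp (-1) ≤ Real.Gamma (1 + s) := by
  have hpos : (0:ℝ) < 1 + s := by linarith
  rw [Real.Gamma_eq_integral hpos]
  have hfun : (fun x : ℝ => Real.exp (-x) * x ^ (1 + s - 1)) = fun x => Real.exp (-x) * x ^ s := by
    norm_num
  rw [hfun]
  have hconv : IntegrableOn (fun x : ℝ => Real.exp (-x) * x ^ s) (Set.Ioi 0) volume := by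
    have := Real.GammaIntegral_convergent hpos
    rwa [hfun] at this
  have hsplit : (∫ x in Set.Ioi (0:ℝ), Real.exp (-x) * x ^ s)
      = (∫ x in Set.Ioc (0:ℝ) 1, Real.exp (-x) * x ^ s)
        + ∫ x in Set.Ioi (1:ℝ), Real.exp (-x) * x ^ s := by
    rw [← MeasureTheory.setIntegral_union (Set.Ioc_disjoint_Ioi le_rfl) measurableSet_Ioi
      (hconv.mono_set Set.Ioc_subset_Ioi_self)
      (hconv.mono_set (Set.Ioi_subset_Ioi one_pos.le)),
      Set.Ioc_union_Ioi_eq_Ioi one_pos.le]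
  -- lower bound on (0,1]
  have hc1 : Continuous fun x : ℝ => Real.exp (-x) * x := by continuity
  have hlow1 : (1 - 2 * Real.exp (-1)) ≤ ∫ x in Set.Ioc (0:ℝ) 1, Real.exp (-x) * x ^ s := by
    have hval : (∫ x in Set.Ioc (0:ℝ) 1, Real.exp (-x) * x) = 1 - 2 * Real.exp (-1) := by
      rw [← intervalIntegral.integral_of_le (by norm_num : (0:ℝ) ≤ 1)]
      have hF : ∀ x ∈ Set.uIcc (0:ℝ) 1,
          HasDerivAt (fun y : ℝ => -((y + 1) * Real.exp (-y))) (Real.exp (-x) * x) x := by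
        intro x _
        have h1 : HasDerivAt (fun y : ℝ => Real.exp (-y)) (Real.exp (-x) * (-1)) x := by
          exact ((hasDerivAt_id x).neg).exp
        have h2 := (((hasDerivAt_id x).add_const 1).mul h1).fun_neg
        refine h2.congr_deriv ?_
        simp only [id_eq]
        ring
      rw [intervalIntegral.integral_eq_sub_of_hasDerivAt hF (hc1.intervalIntegrable 0 1)]
      simp [Real.exp_zero]
      ring
    rw [← hval]
    apply setIntegral_mono_on (hc1.integrableOn_Ioc)
      (hconv.mono_set Set.Ioc_subset_Ioi_self) measurableSet_Ioc
    intro x hx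
    have hx0 : (0:ℝ) < x := hx.1
    have : x ^ (1:ℝ) ≤ x ^ s := Real.rpow_le_rpow_of_exponent_ge hx0 hx.2 h1
    rw [Real.rpow_one] at this
    exact mul_le_mul_of_nonneg_left this (Real.exp_pos _).le
  -- lower bound on (1,∞)
  have hlow2 : Real.exp (-1) ≤ ∫ x in Set.Ioi (1:ℝ), Real.exp (-x) * x ^ s := by
    have hval : (∫ x in Set.Ioi (1:ℝ), Real.exp (-x)) = Real.exp (-1) :=
      integral_exp_neg_Ioi 1
    rw [← hval]
    have hexpint : IntegrableOn (fun x : ℝ => Real.exp (-x)) (Set.Ioi 1) volume := by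
      have := exp_neg_integrableOn_Ioi (1:ℝ) (by norm_num : (0:ℝ) < 1)
      simpa using this
    apply setIntegral_mono_on hexpint
      (hconv.mono_set (Set.Ioi_subset_Ioi one_pos.le)) measurableSet_Ioi
    intro x hx
    have hx1 : (1:ℝ) ≤ x := le_of_lt hx
    have : (1:ℝ) ≤ x ^ s := Real.one_le_rpow hx1 h0.le
    nlinarith [Real.exp_pos (-x)]
  rw [hsplit]
  linarith

/-- `log 3 ≥ 1.007`. -/
lemma log_three_ge : (1.007:ℝ) ≤ Real.log 3 := by
  rw [Real.le_log_iff_exp_le (by norm_num : (0:ℝ) < 3)]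
  have h1 : Real.exp (1.007:ℝ) = Real.exp 1 * Real.exp (0.007:ℝ) := by
    rw [← Real.exp_add]; norm_num
  have h2 : Real.exp (0.007:ℝ) ≤ (0.993:ℝ)⁻¹ := by
    have ha : (0.993:ℝ) ≤ Real.exp (-0.007) := by
      have := Real.add_one_le_exp (-0.007:ℝ)
      linarith
    have hb : Real.exp (0.007:ℝ) = (Real.exp (-0.007:ℝ))⁻¹ := by
      rw [← Real.exp_neg]; norm_num
    rw [hb]
    exact inv_anti₀ (by norm_num) ha
  have h3 : Real.exp 1 < 2.7182818286 := Real.exp_one_lt_d9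
  rw [h1]
  nlinarith [Real.exp_pos (0.007:ℝ)]

lemma exp_neg_one_le : Real.exp (-1:ℝ) ≤ 0.368 := by
  rw [Real.exp_neg]
  have h := Real.exp_one_gt_d9
  have h2 : (0:ℝ) < Real.exp 1 := Real.exp_pos 1
  rw [inv_le_comm₀ (by positivity) (by norm_num)]
  calc (0.368:ℝ)⁻¹ ≤ 2.7182818283 := by norm_num
  _ ≤ Real.exp 1 := h.le

lemma gnd_key_ineq (γ L : ℝ) (hγ : 1 ≤ γ) (hL3 : 1.007 ≤ L) :
    (2 * γ * L + 1) * Real.exp (-(2 * L * ((2 * γ * L) ^ (γ - 1) - 1)))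
      ≤ 6 * (1 - Real.exp (-1:ℝ)) * L := by
  have hγ0 : (0:ℝ) < γ := by linarith
  have hL1 : (1:ℝ) ≤ L := by linarith
  have hu := exp_neg_one_le
  set t := 2 * γ * L with htdef
  have hγL : (1:ℝ) * 1 ≤ γ * L := mul_le_mul hγ hL1 (by norm_num) (by linarith)
  have ht2 : (2:ℝ) ≤ t := by rw [htdef]; nlinarith
  have ht1 : (1:ℝ) ≤ t := by linarith
  have ht0 : (0:ℝ) < t := by linarith
  have hA1 : (1:ℝ) ≤ t ^ (γ - 1) := Real.one_le_rpow ht1 (by linarith)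
  set A := t ^ (γ - 1) with hAdef
  by_cases hcase : γ ≤ 1.35
  · have hfac : Real.exp (-(2 * L * (A - 1))) ≤ 1 := by
      rw [Real.exp_le_one_iff]
      nlinarith
    have hT : (0:ℝ) ≤ t + 1 := by linarith
    have h1 : (t + 1) * Real.exp (-(2 * L * (A - 1))) ≤ t + 1 := by
      nlinarith [Real.exp_pos (-(2 * L * (A - 1)))]
    have h2 : t + 1 ≤ 6 * (1 - Real.exp (-1:ℝ)) * L := by
      rw [htdef]
      nlinarith [mul_nonneg (sub_nonneg.2 hu) (by linarith : (0:ℝ) ≤ L),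
        mul_nonneg (by linarith : (0:ℝ) ≤ 1.35 - γ) (by linarith : (0:ℝ) ≤ L)]
    linarith
  · push_neg at hcase
    have hγL2 : (1.35:ℝ) * 1.007 ≤ γ * L :=
      mul_le_mul hcase.le hL3 (by norm_num) (by linarith)
    have hlogt : (1:ℝ) ≤ Real.log t := by
      rw [Real.le_log_iff_exp_le ht0, htdef]
      have h := Real.exp_one_lt_d9
      nlinarith
    have hAe : γ - 1 ≤ A - 1 := by
      have h1 : A = Real.exp ((γ - 1) * Real.log t) := by
        rw [hAdef, Real.rpow_def_of_pos ht0, mul_comm]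
      have h2 := Real.add_one_le_exp ((γ - 1) * Real.log t)
      nlinarith [mul_le_mul_of_nonneg_left hlogt (by linarith : (0:ℝ) ≤ γ - 1)]
    have hstep : Real.exp (-(2 * L * (A - 1))) ≤ Real.exp (-(2 * (γ - 1))) := by
      apply Real.exp_le_exp.2
      nlinarith [mul_le_mul_of_nonneg_left hAe (by linarith : (0:ℝ) ≤ 2 * L)]
    have hE : Real.exp (-(2 * (γ - 1))) ≤ (2 * γ - 1)⁻¹ := by
      rw [Real.exp_neg]
      apply inv_anti₀ (by linarith)
      have := Real.add_one_le_exp (2 * (γ - 1))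
      linarith
    have hT : (0:ℝ) ≤ t + 1 := by linarith
    calc (t + 1) * Real.exp (-(2 * L * (A - 1)))
        ≤ (t + 1) * (2 * γ - 1)⁻¹ :=
          mul_le_mul_of_nonneg_left (hstep.trans hE) hT
    _ ≤ 6 * (1 - Real.exp (-1:ℝ)) * L := by
        rw [← div_eq_mul_inv, div_le_iff₀ (by linarith : (0:ℝ) < 2 * γ - 1), htdef]
        nlinarith [mul_nonneg (sub_nonneg.2 hu)
            (mul_nonneg (by linarith : (0:ℝ) ≤ L) hγ0.le),
          mul_nonneg (by linarith : (0:ℝ) ≤ γ - 1.35) (by linarith : (0:ℝ) ≤ L),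
          mul_nonneg (sub_nonneg.2 hu) (by linarith : (0:ℝ) ≤ L)]

/-- Let `γ ≥ 1` and `n ≥ 3` a natural number. If `W ∼ GND(0,1)` with shape `γ`, then the
truncated `γ`-th absolute moment satisfies `E[|W|^γ 1_{|W| > 2γ log n}] ≤ 6 (log n)/n²`,
equivalently
`{γ^{1/γ} Γ(1+1/γ)}⁻¹ ∫_{2γ log n}^∞ w^γ exp(−w^γ/γ) dw ≤ 6 (log n)/n²`. -/
theorem gnd_truncated_moment_bound (γ : ℝ) (hγ : 1 ≤ γ) (n : ℕ) (hn : 3 ≤ n) :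
    (γ ^ (1 / γ) * Real.Gamma (1 + 1 / γ))⁻¹ *
      ∫ w in Set.Ioi (2 * γ * Real.log n), w ^ γ * Real.exp (-(w ^ γ / γ))
      ≤ 6 * Real.log n / (n : ℝ) ^ 2 := by
  have hn3 : (3:ℝ) ≤ (n:ℝ) := by exact_mod_cast hn
  have hn0 : (0:ℝ) < (n:ℝ) := by linarith
  set L := Real.log n with hLdef
  have hL3 : (1.007:ℝ) ≤ L := le_trans log_three_ge (Real.log_le_log (by norm_num) hn3)
  have hL1 : (1:ℝ) ≤ L := by linarith
  have hγ0 : (0:ℝ) < γ := by linarith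
  set t := 2 * γ * L with htdef
  have ht1 : (1:ℝ) ≤ t := by
    rw [htdef]
    nlinarith [mul_le_mul hγ hL1 (by norm_num) (by linarith : (0:ℝ) ≤ γ)]
  have ht0 : (0:ℝ) < t := by linarith
  have hu := exp_neg_one_le
  have hu0 : (0:ℝ) < 1 - Real.exp (-1:ℝ) := by linarith
  have hΓ : 1 - Real.exp (-1:ℝ) ≤ Real.Gamma (1 + 1/γ) :=
    gamma_one_add_ge (by positivity) (by rw [div_le_one hγ0]; exact hγ)
  have hpow : (1:ℝ) ≤ γ ^ (1/γ) := Real.one_le_rpow hγ (by positivity)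
  have hP : 1 - Real.exp (-1:ℝ) ≤ γ ^ (1/γ) * Real.Gamma (1 + 1/γ) := by
    calc 1 - Real.exp (-1:ℝ) ≤ Real.Gamma (1 + 1/γ) := hΓ
    _ = 1 * Real.Gamma (1 + 1/γ) := (one_mul _).symm
    _ ≤ γ ^ (1/γ) * Real.Gamma (1 + 1/γ) :=
        mul_le_mul_of_nonneg_right hpow (by linarith)
  have hPinv : (γ ^ (1/γ) * Real.Gamma (1 + 1/γ))⁻¹ ≤ (1 - Real.exp (-1:ℝ))⁻¹ :=
    inv_anti₀ hu0 hP
  have hI0 : 0 ≤ ∫ w in Set.Ioi t, w ^ γ * Real.exp (-(w ^ γ / γ)) := by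
    apply setIntegral_nonneg measurableSet_Ioi
    intro x hx
    have hx0 : (0:ℝ) ≤ x := le_trans ht0.le (le_of_lt hx)
    exact mul_nonneg (Real.rpow_nonneg hx0 γ) (Real.exp_pos _).le
  have hItail := gnd_tail_integral_le hγ ht1
  have hexp_eq : t ^ γ / γ = 2 * L * (t ^ (γ - 1) - 1) + 2 * L := by
    have h := Real.rpow_add ht0 1 (γ - 1)
    have e : (1:ℝ) + (γ - 1) = γ := by ring
    rw [e, Real.rpow_one] at h
    rw [h, htdef]
    field_simp
    ring
  have key0 := gnd_key_ineq γ L hγ hL3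
  rw [← htdef] at key0
  have key : (t + 1) * Real.exp (-(t ^ γ / γ)) ≤
      6 * (1 - Real.exp (-1:ℝ)) * L * Real.exp (-(2 * L)) := by
    rw [hexp_eq, neg_add, Real.exp_add,
      show (t + 1) * (Real.exp (-(2 * L * (t ^ (γ - 1) - 1))) * Real.exp (-(2 * L)))
        = ((t + 1) * Real.exp (-(2 * L * (t ^ (γ - 1) - 1)))) * Real.exp (-(2 * L)) by ring,
      show 6 * (1 - Real.exp (-1:ℝ)) * L * Real.exp (-(2 * L))
        = (6 * (1 - Real.exp (-1:ℝ)) * L) * Real.exp (-(2 * L)) by ring]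
    apply mul_le_mul_of_nonneg_right _ (Real.exp_pos _).le
    rw [htdef]
    exact key0
  have hrhs : 6 * L / (n:ℝ) ^ 2 = 6 * L * Real.exp (-(2 * L)) := by
    have hsq : (n:ℝ) ^ 2 = Real.exp (2 * L) := by
      calc (n:ℝ) ^ 2 = Real.exp L ^ 2 := by rw [Real.exp_log hn0]
      _ = Real.exp (2 * L) := by rw [two_mul, Real.exp_add]; ring
    rw [hsq, Real.exp_neg, div_eq_mul_inv]
  rw [hrhs]
  calc (γ ^ (1 / γ) * Real.Gamma (1 + 1 / γ))⁻¹ *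
        ∫ w in Set.Ioi t, w ^ γ * Real.exp (-(w ^ γ / γ))
      ≤ (1 - Real.exp (-1:ℝ))⁻¹ *
        ∫ w in Set.Ioi t, w ^ γ * Real.exp (-(w ^ γ / γ)) :=
        mul_le_mul_of_nonneg_right hPinv hI0
  _ ≤ (1 - Real.exp (-1:ℝ))⁻¹ * ((t + 1) * Real.exp (-(t ^ γ / γ))) :=
        mul_le_mul_of_nonneg_left hItail (inv_nonneg.2 hu0.le)
  _ ≤ (1 - Real.exp (-1:ℝ))⁻¹ *
        (6 * (1 - Real.exp (-1:ℝ)) * L * Real.exp (-(2 * L))) :=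
        mul_le_mul_of_nonneg_left key (inv_nonneg.2 hu0.le)
  _ = 6 * L * Real.exp (-(2 * L)) := by
        field_simp
end

section
/- For every real s > 0 and every real β, the pointwise likelihood loss satisfies s·e^β − β ≥ |β| + 2·min{0, 1 − log(2/s)}. -/
open Real

/-! The tangent-line bound `exp x ≥ 1 + x`, shifted by `log (s / 2)`, gives
`s e^β - β ≥ β + 2 (1 - log (2 / s))`, while positivity of `s e^β` gives `s e^β - β ≥ -β`.
The maximum of these two lower bounds dominates `|β| + 2 min {0, 1 - log (2 / s)}`. -/

theorem Real.add_log_add_one_le_mul_exp {a : ℝ} (ha : 0 < a) (x : ℝ) :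
    x + log a + 1 ≤ a * exp x := by
  simpa [exp_add, exp_log ha, mul_comm] using add_one_le_exp (x + log a)

theorem Real.add_two_mul_one_sub_log_le_mul_exp_sub {s : ℝ} (hs : 0 < s) (β : ℝ) :
    β + 2 * (1 - log (2 / s)) ≤ s * exp β - β := by
  have h := add_log_add_one_le_mul_exp (half_pos hs) β
  have hlog : log (2 / s) = -log (s / 2) := by rw [← log_inv, inv_div]
  linarith

theorem abs_add_two_mul_min_le {β c L : ℝ} (hneg : -β ≤ L) (hpos : β + 2 * c ≤ L) :
    |β| + 2 * min 0 c ≤ L := by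
  rcases le_total 0 β with hβ | hβ
  · rw [abs_of_nonneg hβ]
    linarith [min_le_right 0 c]
  · rw [abs_of_nonpos hβ]
    linarith [min_le_left 0 c]

/-- For every real `s > 0` and every real `β`, the pointwise likelihood loss satisfies
`s e^β − β ≥ |β| + 2 min{0, 1 − log(2/s)}`. -/
theorem likelihood_loss_lower_bound (s : ℝ) (hs : 0 < s) (β : ℝ) :
    |β| + 2 * min 0 (1 - Real.log (2 / s)) ≤ s * Real.exp β - β := by
  refine abs_add_two_mul_min_le ?_ (add_two_mul_one_sub_log_le_mul_exp_sub hs β)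
  have : 0 < s * exp β := by positivity
  linarith
end
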